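/- For m = 5 (so n = 12), the constant κ_5 equals ln 2 + (3/2)·ln 3 + √3·ln(2+√3); that is, 6·∫₀¹ (1−x⁵)²/(1−x¹²) dx = ln 2 + (3/2)·ln 3 + √3·ln(2+√3). -/

import Mathlib

/-!
Since `1 - x ^ k = (1 - x) ∑_{i<k} x ^ i`, the integrand is the rational function
`(1 - x) (∑_{i<5} x ^ i)² / ∑_{i<12} x ^ i`. Its denominator is the product of the cyclotomic
polynomials `Φ_d`, `1 < d ∣ 12`, which over `ℝ` split into `1 + x` and the quadratics
`x² + b x + 1`, `b ∈ {-1, 0, 1, √3, -√3}`. Partial fractions therefore give a primitive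
that is a combination of `log (1 + x)` and `log (x² + b x + 1)`; at `x = 1` the `±√3` terms
combine because `(2 - √3)(2 + √3) = 1`.
-/

open Real Finset

lemma one_sub_pow_sq_div_one_sub_pow {K : Type*} [Field K] (x : K) (m n : ℕ) :
    (1 - x ^ m) ^ 2 / (1 - x ^ n) =
      (1 - x) * (∑ i ∈ range m, x ^ i) ^ 2 / ∑ i ∈ range n, x ^ i := by
  rcases eq_or_ne x 1 with rfl | hx
  · simp
  rw [← mul_neg_geom_sum x m, ← mul_neg_geom_sum x n, mul_pow, sq (1 - x), mul_assoc,
    mul_div_mul_left _ _ (sub_ne_zero.mpr hx.symm)]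

lemma sq_add_mul_add_one_pos {b : ℝ} (hb : b ^ 2 < 4) (x : ℝ) : 0 < x ^ 2 + b * x + 1 := by
  nlinarith [sq_nonneg (2 * x + b)]

noncomputable def logQuadratic (b x : ℝ) : ℝ := log (x ^ 2 + b * x + 1)

lemma hasDerivAt_logQuadratic {b : ℝ} (hb : b ^ 2 < 4) (x : ℝ) :
    HasDerivAt (logQuadratic b) ((2 * x + b) / (x ^ 2 + b * x + 1)) x := by
  have h : HasDerivAt (fun y => y ^ 2 + b * y + 1) (2 * x + b) x := by
    simpa using ((hasDerivAt_pow 2 x).add ((hasDerivAt_id x).const_mul b)).add_const 1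
  exact h.log (sq_add_mul_add_one_pos hb x).ne'

@[simp] lemma logQuadratic_zero (b : ℝ) : logQuadratic b 0 = 0 := by
  simp [logQuadratic]

lemma logQuadratic_one (b : ℝ) : logQuadratic b 1 = log (2 + b) := by
  rw [logQuadratic]; ring_nf

lemma sqrt_three_sq_lt_four : √3 ^ 2 < 4 := by norm_num

noncomputable def kappaFivePrimitive (x : ℝ) : ℝ :=
  1 / 3 * log (1 + x) + 1 / 12 * logQuadratic (-1) x - 1 / 6 * logQuadratic 0 x
    + 1 / 4 * logQuadratic 1 x
    + ((√3 - 2) / 12 * logQuadratic √3 x - (√3 + 2) / 12 * logQuadratic (-√3) x)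

lemma sqrt_three_partial_fractions (x : ℝ) :
    (√3 - 2) / 12 * ((2 * x + √3) / (x ^ 2 + √3 * x + 1))
      - (√3 + 2) / 12 * ((2 * x + -√3) / (x ^ 2 + -√3 * x + 1))
      = (3 + 2 * x - 3 * x ^ 2 - 4 * x ^ 3) / (6 * (x ^ 4 - x ^ 2 + 1)) := by
  have hplus := (sq_add_mul_add_one_pos sqrt_three_sq_lt_four x).ne'
  have hminus := (sq_add_mul_add_one_pos (b := -√3) (by simpa using sqrt_three_sq_lt_four) x).ne'
  have hquartic : 6 * (x ^ 4 - x ^ 2 + 1) ≠ 0 := by nlinarith [sq_nonneg (2 * x ^ 2 - 1)]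
  -- `(x² + √3 x + 1)(x² - √3 x + 1) = x⁴ - x² + 1`
  rw [mul_div_assoc', mul_div_assoc', div_sub_div _ _ hplus hminus,
    div_eq_div_iff (mul_ne_zero hplus hminus) hquartic]
  linear_combination ((1 - x ^ 2 + 2 * x) * (x ^ 4 - x ^ 2 + 1)
    + x ^ 2 * (3 + 2 * x - 3 * x ^ 2 - 4 * x ^ 3)) * sq_sqrt (zero_le_three (α := ℝ))

lemma hasDerivAt_kappaFivePrimitive {x : ℝ} (hx : -1 < x) :
    HasDerivAt kappaFivePrimitive
      ((1 - x) * (∑ i ∈ range 5, x ^ i) ^ 2 / ∑ i ∈ range 12, x ^ i) x := by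
  have hlog : HasDerivAt (fun y => log (1 + y)) (1 / (1 + x)) x :=
    ((hasDerivAt_id' x).const_add 1).log (by linarith)
  have hF := ((((hlog.const_mul (1 / 3)).add
    ((hasDerivAt_logQuadratic (b := -1) (by norm_num) x).const_mul (1 / 12))).sub
    ((hasDerivAt_logQuadratic (b := 0) (by norm_num) x).const_mul (1 / 6))).add
    ((hasDerivAt_logQuadratic (b := 1) (by norm_num) x).const_mul (1 / 4))).add
    (((hasDerivAt_logQuadratic sqrt_three_sq_lt_four x).const_mul ((√3 - 2) / 12)).sub
      ((hasDerivAt_logQuadratic (b := -√3) (by simpa using sqrt_three_sq_lt_four) x).const_mul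
        ((√3 + 2) / 12)))
  refine hF.congr_deriv ?_
  rw [sqrt_three_partial_fractions]
  have hgeom := (geom_sum_pos' (x := x) (n := 12) (by linarith) (by norm_num)).ne'
  simp only [sum_range_succ, sum_range_zero, zero_add, pow_zero, pow_one] at hgeom ⊢
  simp only [neg_one_mul, ← sub_eq_add_neg, zero_mul, add_zero, one_mul]
  -- nonvanishing denominators, in the shape `field_simp` normalises them to
  have h1 : 1 + x ≠ 0 := by linarith
  have h2 : x * (x - 1) + 1 ≠ 0 := by nlinarith [sq_nonneg (2 * x - 1)]
  have h3 : x * (x + 1) + 1 ≠ 0 := by nlinarith [sq_nonneg (2 * x + 1)]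
  have h4 : x ^ 2 * (x ^ 2 - 1) + 1 ≠ 0 := by nlinarith [sq_nonneg (2 * x ^ 2 - 1)]
  field_simp
  ring

lemma log_two_sub_sqrt_three : log (2 - √3) = -log (2 + √3) := by
  have h : (2 - √3) * (2 + √3) = 1 := by
    linear_combination -sq_sqrt (zero_le_three (α := ℝ))
  rw [eq_inv_of_mul_eq_one_left h, log_inv]

lemma kappaFivePrimitive_zero : kappaFivePrimitive 0 = 0 := by
  simp [kappaFivePrimitive]

lemma kappaFivePrimitive_one :
    kappaFivePrimitive 1 = log 2 / 6 + log 3 / 4 + √3 / 6 * log (2 + √3) := by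
  simp only [kappaFivePrimitive, logQuadratic_one, ← sub_eq_add_neg,
    log_two_sub_sqrt_three]
  norm_num
  ring

/-- For `m = 5` (so `n = 12`), the constant `κ₅ = (n/2)·∫₀¹ (1-x^m)²/(1-x^n) dx`
equals `ln 2 + (3/2)·ln 3 + √3·ln(2+√3)`. -/
theorem kappa_five_eq :
    6 * ∫ x in (0:ℝ)..1, (1 - x ^ 5) ^ 2 / (1 - x ^ 12) =
      Real.log 2 + (3 / 2) * Real.log 3 + Real.sqrt 3 * Real.log (2 + Real.sqrt 3) := by
  have hftc : ∫ x in (0:ℝ)..1, (1 - x ^ 5) ^ 2 / (1 - x ^ 12) =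
      kappaFivePrimitive 1 - kappaFivePrimitive 0 := by
    simp_rw [one_sub_pow_sq_div_one_sub_pow]
    have hgt : ∀ x ∈ Set.uIcc (0 : ℝ) 1, -1 < x := fun x hx => by
      rw [Set.uIcc_of_le zero_le_one] at hx
      linarith [hx.1]
    refine intervalIntegral.integral_eq_sub_of_hasDerivAt
      (fun x hx => hasDerivAt_kappaFivePrimitive (hgt x hx)) (ContinuousOn.intervalIntegrable ?_)
    exact (by fun_prop : Continuous _).continuousOn.div (by fun_prop) fun x hx =>
      (geom_sum_pos' (by linarith [hgt x hx]) (by norm_num)).ne'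
  rw [hftc, kappaFivePrimitive_zero, kappaFivePrimitive_one]
  ring
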